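/- arXiv:1911.10525 — 5 statements merged into one kernel-verified Lean document; each statement's English description precedes it below -/
import Mathlib

section
/- For real q > 0, b < 0 with -1/b > n/q, and dimension n ≥ 1, the integral over ℝⁿ of (1 + |x|^q)^{1/b} equals (2π^{n/2}/q)·Γ(n/q)Γ(-n/q - 1/b)/(Γ(n/2)Γ(-1/b)). -/
/-!
In polar coordinates the integral is the area `2π^{n/2}/Γ(n/2)` of the unit sphere times the
radial integral `∫₀^∞ ρ^{n-1} (1 + ρ^q)^{1/b} dρ`. The substitution `u = ρ^q` turns the latter
into `q⁻¹ ∫₀^∞ u^{n/q-1} (1 + u)^{1/b} du`, and `u = x/(1-x)` turns this into the Beta integral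
`B(n/q, -1/b - n/q) = Γ(n/q) Γ(-1/b - n/q) / Γ(-1/b)`.
-/

open MeasureTheory Real Set

theorem integral_Ioo_rpow_mul_one_sub_rpow {s t : ℝ} (hs : 0 < s) (ht : 0 < t) :
    ∫ x in Ioo (0 : ℝ) 1, x ^ (s - 1) * (1 - x) ^ (t - 1) = Gamma s * Gamma t / Gamma (s + t) := by
  have hbeta : Complex.betaIntegral s t
      = ((∫ x in (0 : ℝ)..1, x ^ (s - 1) * (1 - x) ^ (t - 1) : ℝ) : ℂ) := by
    rw [Complex.betaIntegral, ← intervalIntegral.integral_ofReal]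
    refine intervalIntegral.integral_congr fun x hx ↦ ?_
    rw [uIcc_of_le zero_le_one] at hx
    push_cast [Complex.ofReal_cpow hx.1, Complex.ofReal_cpow (sub_nonneg.2 hx.2)]
    rfl
  rw [Complex.betaIntegral_eq_Gamma_mul_div _ _ (by simpa) (by simpa), ← Complex.ofReal_add,
    Complex.Gamma_ofReal, Complex.Gamma_ofReal, Complex.Gamma_ofReal] at hbeta
  rw [← integral_Ioc_eq_integral_Ioo, ← intervalIntegral.integral_of_le zero_le_one]
  exact_mod_cast hbeta.symm

theorem bijOn_div_one_sub_Ioo_Ioi : BijOn (fun x : ℝ ↦ x / (1 - x)) (Ioo 0 1) (Ioi 0) := by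
  refine InvOn.bijOn (f' := fun u ↦ u / (1 + u)) ⟨fun x ⟨_, hx1⟩ ↦ ?_, fun u (hu : 0 < u) ↦ ?_⟩
    (fun x ⟨hx0, hx1⟩ ↦ div_pos hx0 (sub_pos.2 hx1))
    (fun u (hu : 0 < u) ↦ ⟨by positivity, (div_lt_one (by positivity)).2 (by linarith)⟩)
  · have : 1 - x ≠ 0 := (sub_pos.2 hx1).ne'
    field_simp
    ring
  · have : 1 + u ≠ 0 := by positivity
    field_simp
    ring

theorem integral_Ioi_rpow_mul_one_add_rpow_neg {s t : ℝ} (hs : 0 < s) (ht : 0 < t) :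
    ∫ u in Ioi (0 : ℝ), u ^ (s - 1) * (1 + u) ^ (-(s + t)) = Gamma s * Gamma t / Gamma (s + t) := by
  have hderiv : ∀ x ∈ Ioo (0 : ℝ) 1,
      HasDerivWithinAt (fun x ↦ x / (1 - x)) ((1 - x) ^ 2)⁻¹ (Ioo 0 1) x := fun x ⟨_, hx1⟩ ↦ by
    have h := (hasDerivAt_id x).div ((hasDerivAt_const x 1).sub (hasDerivAt_id x))
      (sub_pos.2 hx1).ne'
    exact (h.congr_deriv (by simp only [Pi.sub_apply, id]; ring)).hasDerivWithinAt
  rw [← bijOn_div_one_sub_Ioo_Ioi.image_eq, integral_image_eq_integral_abs_deriv_smul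
    measurableSet_Ioo hderiv bijOn_div_one_sub_Ioo_Ioi.injOn,
    ← integral_Ioo_rpow_mul_one_sub_rpow hs ht]
  refine setIntegral_congr_fun measurableSet_Ioo fun x ⟨hx0, hx1⟩ ↦ ?_
  have hy : 0 < 1 - x := sub_pos.2 hx1
  have hsum : 1 + x / (1 - x) = (1 - x)⁻¹ := by field_simp; ring
  have hsplit : (1 - x) ^ (s + t) = (1 - x) ^ (s - 1) * (1 - x) ^ (t - 1) * (1 - x) ^ 2 := by
    rw [← rpow_natCast, ← rpow_add hy, ← rpow_add hy]
    ring_nf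
  rw [smul_eq_mul, abs_of_pos (by positivity), hsum, div_rpow hx0.le hy.le,
    inv_rpow hy.le, rpow_neg hy.le, inv_inv, hsplit]
  have : (1 - x) ^ (s - 1) ≠ 0 := (rpow_pos_of_pos hy _).ne'
  field_simp

theorem integral_Ioi_rpow_mul_one_add_rpow_rpow_neg {s q c : ℝ} (hs : 0 < s) (hq : 0 < q)
    (hc : s / q < c) :
    ∫ y in Ioi (0 : ℝ), y ^ (s - 1) * (1 + y ^ q) ^ (-c)
      = Gamma (s / q) * Gamma (c - s / q) / (q * Gamma c) := by
  have hsubst := integral_comp_rpow_Ioi_of_pos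
    (g := fun u : ℝ ↦ u ^ (s / q - 1) * (1 + u) ^ (-(s / q + (c - s / q)))) hq
  have hintegrand : ∀ y ∈ Ioi (0 : ℝ),
      (q * y ^ (q - 1)) • ((y ^ q) ^ (s / q - 1) * (1 + y ^ q) ^ (-(s / q + (c - s / q))))
        = q * (y ^ (s - 1) * (1 + y ^ q) ^ (-c)) := fun y (hy : 0 < y) ↦ by
    have hexp : y ^ (q - 1) * (y ^ q) ^ (s / q - 1) = y ^ (s - 1) := by
      rw [← rpow_mul hy.le, ← rpow_add hy]
      congr 1
      field_simp
      ring
    rw [smul_eq_mul, add_sub_cancel, ← hexp]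
    ring
  rw [setIntegral_congr_fun measurableSet_Ioi hintegrand, integral_const_mul,
    integral_Ioi_rpow_mul_one_add_rpow_neg (div_pos hs hq) (sub_pos.2 hc), add_sub_cancel]
    at hsubst
  rw [div_mul_eq_div_div_swap, ← hsubst, mul_div_cancel_left₀ _ hq.ne']

theorem EuclideanSpace.integral_fun_norm {ι : Type*} [Fintype ι] [Nonempty ι]
    {F : Type*} [NormedAddCommGroup F] [NormedSpace ℝ F] (f : ℝ → F) :
    ∫ x : EuclideanSpace ℝ ι, f ‖x‖
      = (2 * π ^ ((Fintype.card ι : ℝ) / 2) / Gamma (Fintype.card ι / 2)) •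
          ∫ y in Ioi (0 : ℝ), y ^ ((Fintype.card ι : ℝ) - 1) • f y := by
  rw [integral_fun_norm_addHaar, finrank_euclideanSpace, measureReal_def,
    EuclideanSpace.volume_ball]
  set n := Fintype.card ι
  have hn : 1 ≤ n := Fintype.card_pos
  have hball : (ENNReal.ofReal 1 ^ n * ENNReal.ofReal (√π ^ n / Gamma (n / 2 + 1))).toReal
      = π ^ ((n : ℝ) / 2) / Gamma (n / 2 + 1) := by
    rw [ENNReal.ofReal_one, one_pow, one_mul, ENNReal.toReal_ofReal (by positivity), sqrt_eq_rpow,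
      ← rpow_natCast, ← rpow_mul pi_pos.le, one_div_mul_eq_div]
  have hpow : ∀ y ∈ Ioi (0 : ℝ), y ^ (n - 1) • f y = y ^ ((n : ℝ) - 1) • f y := fun y _ ↦ by
    rw [← rpow_natCast, Nat.cast_sub hn, Nat.cast_one]
  rw [hball, setIntegral_congr_fun measurableSet_Ioi hpow, Gamma_add_one (by positivity),
    ← smul_assoc, nsmul_eq_mul]
  congr 1
  field_simp

theorem stmt2_general (n : ℕ) (hn : 1 ≤ n) (q b : ℝ) (hq : 0 < q)
    (hconv : (n : ℝ) / q < -1 / b) :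
    ∫ x : EuclideanSpace ℝ (Fin n), (1 + ‖x‖ ^ q) ^ (1 / b)
      = (2 * Real.pi ^ ((n : ℝ) / 2) / q) *
        (Real.Gamma ((n : ℝ) / q) * Real.Gamma (-(n : ℝ) / q - 1 / b) /
          (Real.Gamma ((n : ℝ) / 2) * Real.Gamma (-1 / b))) := by
  have : Nonempty (Fin n) := ⟨⟨0, hn⟩⟩
  have hexp : 1 / b = -(-1 / b) := by ring
  rw [EuclideanSpace.integral_fun_norm fun y ↦ (1 + y ^ q) ^ (1 / b), Fintype.card_fin, hexp]
  simp only [smul_eq_mul]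
  rw [integral_Ioi_rpow_mul_one_add_rpow_rpow_neg (Nat.cast_pos.2 hn) hq hconv,
    show -(n : ℝ) / q - -(-1 / b) = -1 / b - n / q by ring]
  field_simp

theorem stmt2 (n : ℕ) (hn : 1 ≤ n) (q b : ℝ) (hq : 0 < q) (hb : b < 0)
    (hconv : (n : ℝ) / q < -1 / b) :
    ∫ x : EuclideanSpace ℝ (Fin n), (1 + ‖x‖ ^ q) ^ (1 / b)
      = (2 * Real.pi ^ ((n : ℝ) / 2) / q) *
        (Real.Gamma ((n : ℝ) / q) * Real.Gamma (-(n : ℝ) / q - 1 / b) /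
          (Real.Gamma ((n : ℝ) / 2) * Real.Gamma (-1 / b))) :=
  stmt2_general n hn q b hq hconv
end

section
/- Let q > 0, b > 0, C > 0, and let B(x) = (C - |x|^q)_+^{1/b} on ℝⁿ satisfy ∫_{ℝⁿ} B dx = 1. Then ∫_{ℝⁿ} B(x)^{b+1} dx = (q(b+1)/(nb + q(b+1)))·C. -/
/-!
Write `s(r) = max (C - r^q) 0`, so that `B(x) = s(‖x‖)^(1/b)` and `B^(b+1) = s^(1/b + 1)`.
Pointwise `s^(a+1) = (C - r^q) s^a`, which splits `∫ B^(b+1)` as `C ∫ B - ∫ ‖x‖^q B`.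
In polar coordinates, integrating the derivative of `r^n s(r)^p` over `(0, ∞)` (both boundary
terms vanish) gives the Pohozaev-type identity `n ∫ s^p = p q ∫ ‖x‖^q s^(p-1)`. With `p = 1/b + 1`
the two relations determine both `∫ ‖x‖^q B` and `∫ B^(b+1)` in terms of `C ∫ B = C`.
-/

open MeasureTheory Set Filter Topology

lemma hasDerivAt_max_zero_rpow {p : ℝ} (hp : 1 < p) (t : ℝ) :
    HasDerivAt (fun t : ℝ => max t 0 ^ p) (p * max t 0 ^ (p - 1)) t := by
  refine hasDerivAt_of_hasDerivAt_of_ne' (x := 0) (g := fun t => p * max t 0 ^ (p - 1))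
    (fun y hy => ?_) (by fun_prop (disch := linarith)) (by fun_prop (disch := linarith)) t
  rcases hy.lt_or_gt with hy | hy
  · rw [max_eq_right hy.le, Real.zero_rpow (by linarith), mul_zero]
    refine (hasDerivAt_const y ((0 : ℝ) ^ p)).congr_of_eventuallyEq ?_
    filter_upwards [Iio_mem_nhds hy] with z hz
    rw [max_eq_right (le_of_lt hz)]
  · rw [max_eq_left hy.le]
    refine (Real.hasDerivAt_rpow_const (Or.inl hy.ne')).congr_of_eventuallyEq ?_
    filter_upwards [Ioi_mem_nhds hy] with z hz
    rw [max_eq_left (le_of_lt hz)]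

lemma max_zero_rpow_add_one (x : ℝ) {a : ℝ} (ha : 0 < a) :
    max x 0 ^ (a + 1) = x * max x 0 ^ a := by
  rcases le_or_gt x 0 with hx | hx
  · rw [max_eq_right hx, Real.zero_rpow ha.ne', Real.zero_rpow (by linarith), mul_zero]
  · rw [max_eq_left hx.le, Real.rpow_add_one hx.ne', mul_comm]

lemma eventually_max_sub_rpow_rpow_eq_zero {q e : ℝ} (hq : 0 < q) (he : e ≠ 0) (C : ℝ) :
    ∀ᶠ r in atTop, max (C - r ^ q) 0 ^ e = 0 :=
  ((tendsto_rpow_atTop hq).eventually_ge_atTop C).mono fun r hr => by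
    rw [max_eq_right (by linarith), Real.zero_rpow he]

lemma Continuous.integrableOn_Ioi_of_eventuallyEq_zero {f : ℝ → ℝ} (hf : Continuous f)
    (h : f =ᶠ[atTop] 0) (a : ℝ) : IntegrableOn f (Ioi a) := by
  obtain ⟨R, hR⟩ := eventually_atTop.1 h
  refine (hf.integrableOn_Icc (a := a) (b := R)).of_forall_sdiff_eq_zero measurableSet_Ioi ?_
  rintro x ⟨hax, hx⟩
  exact hR x (not_lt.1 fun hxR => hx ⟨le_of_lt hax, hxR.le⟩)

lemma hasDerivAt_pow_succ_mul_max_sub_rpow_rpow (k : ℕ) {p q : ℝ} (hp : 1 < p) (C : ℝ)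
    {r : ℝ} (hr : 0 < r) :
    HasDerivAt (fun r : ℝ => r ^ (k + 1) * max (C - r ^ q) 0 ^ p)
      ((k + 1) * (r ^ k * max (C - r ^ q) 0 ^ p)
        - p * q * (r ^ k * (r ^ q * max (C - r ^ q) 0 ^ (p - 1)))) r := by
  have hinner : HasDerivAt (fun r : ℝ => C - r ^ q) (-(q * r ^ (q - 1))) r :=
    (Real.hasDerivAt_rpow_const (Or.inl hr.ne')).const_sub C
  refine ((hasDerivAt_pow (k + 1) r).mul
    ((hasDerivAt_max_zero_rpow hp _).comp r hinner)).congr_deriv ?_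
  rw [Function.comp_apply, Real.rpow_sub_one hr.ne']
  push_cast
  field_simp
  ring

theorem succ_mul_integral_Ioi_pow_mul_max_sub_rpow_rpow (k : ℕ) {p q : ℝ} (hp : 1 < p)
    (hq : 0 < q) (C : ℝ) :
    (k + 1) * ∫ r in Ioi 0, r ^ k * max (C - r ^ q) 0 ^ p
      = p * q * ∫ r in Ioi 0, r ^ k * (r ^ q * max (C - r ^ q) 0 ^ (p - 1)) := by
  have hvanish (e : ℝ) (he : 0 < e) (g : ℝ → ℝ) :
      (fun r => g r * max (C - r ^ q) 0 ^ e) =ᶠ[atTop] 0 :=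
    (eventually_max_sub_rpow_rpow_eq_zero hq he.ne' C).mono fun r hr => by simp [hr]
  have hint₁ : IntegrableOn (fun r : ℝ => r ^ k * max (C - r ^ q) 0 ^ p) (Ioi 0) :=
    Continuous.integrableOn_Ioi_of_eventuallyEq_zero (by fun_prop (disch := linarith))
      (hvanish p (by linarith) _) 0
  have hint₂ : IntegrableOn (fun r : ℝ => r ^ k * (r ^ q * max (C - r ^ q) 0 ^ (p - 1)))
      (Ioi 0) := by
    refine Continuous.integrableOn_Ioi_of_eventuallyEq_zero (by fun_prop (disch := linarith))
      ((hvanish (p - 1) (by linarith) (fun r => r ^ k * r ^ q)).mono fun r hr => ?_) 0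
    simpa [mul_assoc] using hr
  have hFTC := integral_Ioi_of_hasDerivAt_of_tendsto
    (Continuous.continuousWithinAt (by fun_prop (disch := linarith)))
    (fun r hr => hasDerivAt_pow_succ_mul_max_sub_rpow_rpow k hp C hr)
    ((hint₁.const_mul _).sub (hint₂.const_mul _))
    ((tendsto_const_nhds (x := (0 : ℝ))).congr' (hvanish p (by linarith) (· ^ (k + 1))).symm)
  rw [integral_sub (hint₁.const_mul _) (hint₂.const_mul _), integral_const_mul,
    integral_const_mul] at hFTC
  rw [zero_pow k.succ_ne_zero, zero_mul, sub_zero] at hFTC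
  linarith

section Radial

open Module

variable {E : Type*} [NormedAddCommGroup E] [NormedSpace ℝ E] [Nontrivial E]
  [FiniteDimensional ℝ E] [MeasurableSpace E] [BorelSpace E] (μ : Measure E)
  [μ.IsAddHaarMeasure] {a p q : ℝ} (C : ℝ)

lemma integrable_fun_norm_of_continuous_of_eventuallyEq_zero {f : ℝ → ℝ} (hf : Continuous f)
    (h : f =ᶠ[atTop] 0) : Integrable (fun x : E => f ‖x‖) μ :=
  (integrable_fun_norm_addHaar μ).2 <| Continuous.integrableOn_Ioi_of_eventuallyEq_zero
    (by fun_prop) (h.mono fun r hr => by simp [hr]) 0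

theorem integral_max_sub_norm_rpow_rpow_add_one (ha : 0 < a) (hq : 0 < q) :
    ∫ x, max (C - ‖x‖ ^ q) 0 ^ (a + 1) ∂μ
      = C * ∫ x, max (C - ‖x‖ ^ q) 0 ^ a ∂μ - ∫ x, ‖x‖ ^ q * max (C - ‖x‖ ^ q) 0 ^ a ∂μ := by
  have hvanish := eventually_max_sub_rpow_rpow_eq_zero hq ha.ne' C
  have hint₁ : Integrable (fun x : E => max (C - ‖x‖ ^ q) 0 ^ a) μ :=
    integrable_fun_norm_of_continuous_of_eventuallyEq_zero μ (f := fun r => max (C - r ^ q) 0 ^ a)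
      (by fun_prop (disch := linarith)) hvanish
  have hint₂ : Integrable (fun x : E => ‖x‖ ^ q * max (C - ‖x‖ ^ q) 0 ^ a) μ :=
    integrable_fun_norm_of_continuous_of_eventuallyEq_zero μ
      (f := fun r => r ^ q * max (C - r ^ q) 0 ^ a) (by fun_prop (disch := linarith))
      (hvanish.mono fun r hr => by simp [hr])
  simp_rw [max_zero_rpow_add_one _ ha, sub_mul]
  rw [integral_sub (hint₁.const_mul C) hint₂, integral_const_mul]

theorem finrank_mul_integral_max_sub_norm_rpow_rpow (hp : 1 < p) (hq : 0 < q) :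
    finrank ℝ E * ∫ x, max (C - ‖x‖ ^ q) 0 ^ p ∂μ
      = p * q * ∫ x, ‖x‖ ^ q * max (C - ‖x‖ ^ q) 0 ^ (p - 1) ∂μ := by
  have h1D := succ_mul_integral_Ioi_pow_mul_max_sub_rpow_rpow (finrank ℝ E - 1) hp hq C
  have hd : ((finrank ℝ E - 1 : ℕ) : ℝ) + 1 = finrank ℝ E := by
    rw [← Nat.cast_add_one, Nat.sub_add_cancel finrank_pos]
  rw [hd] at h1D
  rw [integral_fun_norm_addHaar μ (fun r => max (C - r ^ q) 0 ^ p),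
    integral_fun_norm_addHaar μ (fun r => r ^ q * max (C - r ^ q) 0 ^ (p - 1))]
  simp only [nsmul_eq_mul, smul_eq_mul]
  linear_combination (finrank ℝ E * μ.real (Metric.ball 0 1)) * h1D

theorem integral_norm_rpow_mul_max_sub_norm_rpow_rpow (ha : 0 < a) (hq : 0 < q) :
    ∫ x, ‖x‖ ^ q * max (C - ‖x‖ ^ q) 0 ^ a ∂μ
      = finrank ℝ E * C / (finrank ℝ E + (a + 1) * q) * ∫ x, max (C - ‖x‖ ^ q) 0 ^ a ∂μ := by
  have hpohozaev := finrank_mul_integral_max_sub_norm_rpow_rpow μ C (p := a + 1) (by linarith) hq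
  rw [add_sub_cancel_right, integral_max_sub_norm_rpow_rpow_add_one μ C ha hq] at hpohozaev
  have : (0 : ℝ) < finrank ℝ E + (a + 1) * q := by positivity
  rw [div_mul_eq_mul_div, eq_div_iff this.ne']
  linear_combination -hpohozaev

end Radial

theorem stmt4_general (n : ℕ) (hn : 1 ≤ n) (q b C : ℝ) (hq : 0 < q) (hb : 0 < b)
    (hmass : ∫ x : EuclideanSpace ℝ (Fin n), (max (C - ‖x‖ ^ q) 0) ^ (1 / b) = 1) :
    ∫ x : EuclideanSpace ℝ (Fin n), ((max (C - ‖x‖ ^ q) 0) ^ (1 / b)) ^ (b + 1)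
      = (q * (b + 1) / ((n : ℝ) * b + q * (b + 1))) * C := by
  have : Nonempty (Fin n) := ⟨⟨0, hn⟩⟩
  have hpow (s : ℝ) (hs : 0 ≤ s) : (s ^ (1 / b)) ^ (b + 1) = s ^ (1 / b + 1) := by
    rw [← Real.rpow_mul hs]
    congr 1
    field_simp
    ring
  simp_rw [hpow _ (le_max_right _ _)]
  rw [integral_max_sub_norm_rpow_rpow_add_one _ C (by positivity) hq,
    integral_norm_rpow_mul_max_sub_norm_rpow_rpow _ C (by positivity) hq, hmass,
    finrank_euclideanSpace_fin]
  field_simp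
  ring

theorem stmt4 (n : ℕ) (hn : 1 ≤ n) (q b C : ℝ) (hq : 0 < q) (hb : 0 < b) (hC : 0 < C)
    (hmass : ∫ x : EuclideanSpace ℝ (Fin n), (max (C - ‖x‖ ^ q) 0) ^ (1 / b) = 1) :
    ∫ x : EuclideanSpace ℝ (Fin n), ((max (C - ‖x‖ ^ q) 0) ^ (1 / b)) ^ (b + 1)
      = (q * (b + 1) / ((n : ℝ) * b + q * (b + 1))) * C :=
  stmt4_general n hn q b C hq hb hmass
end

section
/- Let n ≥ 1, q > 0, b > 0, γ = b + 1/(p-1) where q = p/(p-1), p > 1, and let B(x) = (C - |x|^q)_+^{1/b} be the normalized Barenblatt profile with ∫B = 1. Then the weighted p-Fisher information I_b(B) = ((b+1)/(γ∫B^{b+1})) · ∫_{ℝⁿ} B^{-1/(p-1)}|∇B^γ|^p dx equals (qγ/b)^{p-1}·n. -/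
/-!
On the support `‖x‖ ^ q < C` one has `B ^ γ = (C - ‖x‖ ^ q) ^ (γ / b)`, and since `(q - 1) p = q`
and `(γ / b - 1) p - 1 / (b (p - 1)) = 1 / b`, the integrand `B ^ (-1 / (p - 1)) ‖∇ B ^ γ‖ ^ p` is
`(q γ / b) ^ p ‖x‖ ^ q B`. In polar coordinates `M₁ = ∫ ‖x‖ ^ q B` and `M₂ = ∫ B ^ (b + 1)` become
integrals against `r ^ (n - 1) dr` over `[0, C ^ (1 / q)]`. Integrating the derivative of
`r ^ n (C - r ^ q) ^ (1 / b + 1)` gives `n M₂ = q (1 / b + 1) M₁`, which yields the value, while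
`‖x‖ ^ q = C - (C - ‖x‖ ^ q)` gives `M₁ = C ∫ B - M₂`, which together with `∫ B = 1` and `C > 0`
rules out `M₂ = 0`.
-/

open MeasureTheory Set Real InnerProductSpace Metric

section Gradient

variable {E : Type*} [NormedAddCommGroup E] [InnerProductSpace ℝ E] [CompleteSpace E]

theorem hasGradientAt_max_sub_norm_rpow_rpow {C q m : ℝ} (hq : 1 < q) {x : E}
    (hx : ‖x‖ ^ q < C) :
    HasGradientAt (fun y : E => (max (C - ‖y‖ ^ q) 0) ^ m)
      ((-(m * (C - ‖x‖ ^ q) ^ (m - 1) * q * ‖x‖ ^ (q - 2))) • x) x := by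
  have hpos : 0 < C - ‖x‖ ^ q := sub_pos.mpr hx
  have hcont : Continuous fun y : E => C - ‖y‖ ^ q :=
    continuous_const.sub (continuous_norm.rpow_const fun _ => Or.inr (by positivity))
  have hmax : (fun y : E => (C - ‖y‖ ^ q) ^ m) =ᶠ[nhds x]
      fun y : E => (max (C - ‖y‖ ^ q) 0) ^ m := by
    filter_upwards [continuousAt_const.eventually_lt hcont.continuousAt hpos] with y hy
    rw [max_eq_left hy.le]
  have hderiv : HasFDerivAt (fun y : E => (C - ‖y‖ ^ q) ^ m)
      ((m * (C - ‖x‖ ^ q) ^ (m - 1)) • -((q * ‖x‖ ^ (q - 2)) • innerSL ℝ x)) x := by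
    exact (Real.hasDerivAt_rpow_const (p := m) (Or.inl hpos.ne')).comp_hasFDerivAt x
      ((hasFDerivAt_norm_rpow x hq).const_sub C)
  have hdual : toDual ℝ E ((-(m * (C - ‖x‖ ^ q) ^ (m - 1) * q * ‖x‖ ^ (q - 2))) • x)
      = (m * (C - ‖x‖ ^ q) ^ (m - 1)) • -((q * ‖x‖ ^ (q - 2)) • innerSL ℝ x) := by
    ext y
    simp
    ring
  rw [hasGradientAt_iff_hasFDerivAt, hdual]
  exact hderiv.congr_of_eventuallyEq hmax.symm

theorem norm_gradient_max_sub_norm_rpow_rpow {C q m : ℝ} (hq : 1 < q) (hm : 0 ≤ m) {x : E}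
    (hx : ‖x‖ ^ q < C) :
    ‖gradient (fun y : E => (max (C - ‖y‖ ^ q) 0) ^ m) x‖
      = m * q * ‖x‖ ^ (q - 1) * (C - ‖x‖ ^ q) ^ (m - 1) := by
  have hpos : 0 < C - ‖x‖ ^ q := sub_pos.mpr hx
  rw [(hasGradientAt_max_sub_norm_rpow_rpow hq hx).gradient, norm_smul, norm_neg,
    Real.norm_of_nonneg (by positivity), show q - 1 = q - 2 + 1 by ring,
    Real.rpow_add_one' (norm_nonneg x) (by linarith)]
  ring

end Gradient

theorem max_sub_norm_rpow_fisher_integrand {E : Type*} [NormedAddCommGroup E]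
    [InnerProductSpace ℝ E] [CompleteSpace E] {p q b γ C : ℝ} (hp : 1 < p)
    (hq : q = p / (p - 1)) (hb : 0 < b) (hγ : γ = b + 1 / (p - 1)) (x : E) :
    ((max (C - ‖x‖ ^ q) 0) ^ (1 / b)) ^ (-1 / (p - 1)) *
      ‖gradient (fun y : E => ((max (C - ‖y‖ ^ q) 0) ^ (1 / b)) ^ γ) x‖ ^ p
    = (q * γ / b) ^ p * (‖x‖ ^ q * (max (C - ‖x‖ ^ q) 0) ^ (1 / b)) := by
  have hp1 : 0 < p - 1 := by linarith
  have hq1 : 1 < q := by rw [hq, lt_div_iff₀ hp1]; linarith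
  have hγ0 : 0 < γ := by rw [hγ]; positivity
  have hprofile : (fun y : E => ((max (C - ‖y‖ ^ q) 0) ^ (1 / b)) ^ γ)
      = fun y : E => (max (C - ‖y‖ ^ q) 0) ^ (γ / b) := by
    funext y
    rw [← Real.rpow_mul (le_max_right _ _), one_div_mul_eq_div]
  rcases le_or_gt C (‖x‖ ^ q) with hout | hin
  · -- Lean's `0 ^ (-1 / (p - 1)) = 0` makes the integrand vanish off the support.
    rw [max_eq_right (sub_nonpos.mpr hout), Real.zero_rpow (by positivity),
      Real.zero_rpow (div_ne_zero (by norm_num) hp1.ne'), zero_mul, mul_zero, mul_zero]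
  · have hpos : 0 < C - ‖x‖ ^ q := sub_pos.mpr hin
    have hexp : 1 / b * (-1 / (p - 1)) + (γ / b - 1) * p = 1 / b := by
      rw [hγ]; field_simp; ring
    have hqp : (q - 1) * p = q := by
      rw [hq]; field_simp; ring
    rw [hprofile, norm_gradient_max_sub_norm_rpow_rpow hq1 (by positivity) hin,
      max_eq_left hpos.le, ← Real.rpow_mul hpos.le]
    calc (C - ‖x‖ ^ q) ^ (1 / b * (-1 / (p - 1)))
          * (γ / b * q * ‖x‖ ^ (q - 1) * (C - ‖x‖ ^ q) ^ (γ / b - 1)) ^ p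
        = (q * γ / b) ^ p * (‖x‖ ^ ((q - 1) * p)
            * ((C - ‖x‖ ^ q) ^ (1 / b * (-1 / (p - 1))) * (C - ‖x‖ ^ q) ^ ((γ / b - 1) * p))) := by
          rw [Real.mul_rpow (by positivity) (by positivity),
            Real.mul_rpow (by positivity) (by positivity), Real.rpow_mul (norm_nonneg x) (q - 1) p,
            Real.rpow_mul hpos.le (γ / b - 1) p, show γ / b * q = q * γ / b by ring]
          ring
      _ = (q * γ / b) ^ p * (‖x‖ ^ q * (C - ‖x‖ ^ q) ^ (1 / b)) := by
          rw [← Real.rpow_add hpos, hexp, hqp]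

section Moments

variable {n : ℕ} {q C s : ℝ}

theorem integral_Ioi_mul_max_sub_rpow_rpow (hq : 0 < q) (hC : 0 ≤ C) (hs : 0 < s) {g : ℝ → ℝ}
    (hg : Continuous g) :
    ∫ r in Ioi (0 : ℝ), g r * (max (C - r ^ q) 0) ^ s
      = ∫ r in (0 : ℝ)..C ^ q⁻¹, g r * (C - r ^ q) ^ s := by
  have hR : 0 ≤ C ^ q⁻¹ := by positivity
  have hvanish : ∀ r ∈ Ioi (C ^ q⁻¹), g r * (max (C - r ^ q) 0) ^ s = 0 := fun r hr => by
    have hCr : C < r ^ q := (Real.rpow_inv_lt_iff_of_pos hC (hR.trans hr.le) hq).mp hr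
    rw [max_eq_right (by linarith), Real.zero_rpow hs.ne', mul_zero]
  have hcont : Continuous fun r : ℝ => g r * (max (C - r ^ q) 0) ^ s :=
    hg.mul (((continuous_const.sub (Real.continuous_rpow_const hq.le)).max
      continuous_const).rpow_const fun _ => Or.inr hs.le)
  rw [intervalIntegral.integral_of_le hR, ← Ioc_union_Ioi_eq_Ioi hR,
    setIntegral_union (Ioc_disjoint_Ioi le_rfl) measurableSet_Ioi hcont.integrableOn_Ioc
      ((integrableOn_congr_fun hvanish measurableSet_Ioi).mpr integrableOn_zero),
    setIntegral_congr_fun measurableSet_Ioi hvanish, integral_zero, add_zero]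
  refine setIntegral_congr_fun measurableSet_Ioc fun r hr => ?_
  have hrC : r ^ q ≤ C := (Real.le_rpow_inv_iff_of_pos hr.1.le hC hq).mp hr.2
  rw [max_eq_left (sub_nonneg.mpr hrC)]

theorem integral_fun_norm_mul_max_sub_rpow_rpow (hn : n ≠ 0) (hq : 0 < q) (hC : 0 ≤ C)
    (hs : 0 < s) {g : ℝ → ℝ} (hg : Continuous g) :
    ∫ x : EuclideanSpace ℝ (Fin n), g ‖x‖ * (max (C - ‖x‖ ^ q) 0) ^ s
      = n * volume.real (ball (0 : EuclideanSpace ℝ (Fin n)) 1)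
          * ∫ r in (0 : ℝ)..C ^ q⁻¹, r ^ (n - 1) * g r * (C - r ^ q) ^ s := by
  have : NeZero n := ⟨hn⟩
  rw [integral_fun_norm_addHaar volume fun r => g r * (max (C - r ^ q) 0) ^ s,
    finrank_euclideanSpace_fin, nsmul_eq_mul]
  simp only [smul_eq_mul, ← mul_assoc]
  rw [integral_Ioi_mul_max_sub_rpow_rpow hq hC hs (g := fun r => r ^ (n - 1) * g r)
    ((continuous_pow _).mul hg)]

theorem hasDerivAt_pow_mul_sub_rpow_rpow_add_one (hn : n ≠ 0) (hq : 1 ≤ q) (hs : 0 ≤ s) {r : ℝ}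
    (hr : 0 ≤ r) :
    HasDerivAt (fun r : ℝ => r ^ n * (C - r ^ q) ^ (s + 1))
      (n * (r ^ (n - 1) * (C - r ^ q) ^ (s + 1))
        - q * (s + 1) * (r ^ (n - 1) * r ^ q * (C - r ^ q) ^ s)) r := by
  have hpow : r ^ n * r ^ (q - 1) = r ^ (n - 1) * r ^ q := by
    rw [← Nat.sub_one_add_one hn, pow_succ, Nat.add_sub_cancel, mul_assoc, mul_comm r,
      ← Real.rpow_add_one' hr (by linarith), sub_add_cancel]
  have hinner : HasDerivAt (fun r : ℝ => C - r ^ q) (-(q * r ^ (q - 1))) r := by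
    simpa using (Real.hasDerivAt_rpow_const (x := r) (Or.inr hq)).const_sub C
  have houter : HasDerivAt (fun t : ℝ => t ^ (s + 1)) ((s + 1) * (C - r ^ q) ^ s) (C - r ^ q) := by
    simpa using Real.hasDerivAt_rpow_const (x := C - r ^ q) (p := s + 1) (Or.inr (by linarith))
  refine ((hasDerivAt_pow n r).mul (houter.comp r hinner)).congr_deriv ?_
  simp only [Function.comp_apply]
  linear_combination (-(q * (s + 1) * (C - r ^ q) ^ s)) * hpow

theorem natCast_mul_intervalIntegral_sub_rpow_add_one (hn : n ≠ 0) (hq : 1 ≤ q) (hC : 0 ≤ C)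
    (hs : 0 ≤ s) :
    n * ∫ r in (0 : ℝ)..C ^ q⁻¹, r ^ (n - 1) * (C - r ^ q) ^ (s + 1)
      = q * (s + 1) * ∫ r in (0 : ℝ)..C ^ q⁻¹, r ^ (n - 1) * r ^ q * (C - r ^ q) ^ s := by
  have hderiv : ∀ r ∈ uIcc 0 (C ^ q⁻¹), HasDerivAt (fun r : ℝ => r ^ n * (C - r ^ q) ^ (s + 1))
      (n * (r ^ (n - 1) * (C - r ^ q) ^ (s + 1))
        - q * (s + 1) * (r ^ (n - 1) * r ^ q * (C - r ^ q) ^ s)) r := fun r hr => by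
    rw [uIcc_of_le (by positivity)] at hr
    exact hasDerivAt_pow_mul_sub_rpow_rpow_add_one hn hq hs hr.1
  have hcont : ∀ t : ℝ, 0 ≤ t → Continuous fun r : ℝ => (C - r ^ q) ^ t := fun t ht => by
    exact (continuous_const.sub (Real.continuous_rpow_const (by linarith))).rpow_const
      fun _ => Or.inr ht
  have hleft : IntervalIntegrable (fun r : ℝ => n * (r ^ (n - 1) * (C - r ^ q) ^ (s + 1)))
      volume 0 (C ^ q⁻¹) :=
    (continuous_const.mul ((continuous_pow _).mul (hcont _ (by linarith)))).intervalIntegrable _ _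
  have hright : IntervalIntegrable
      (fun r : ℝ => q * (s + 1) * (r ^ (n - 1) * r ^ q * (C - r ^ q) ^ s)) volume 0 (C ^ q⁻¹) :=
    (continuous_const.mul (((continuous_pow _).mul
      (Real.continuous_rpow_const (by linarith))).mul (hcont _ hs))).intervalIntegrable _ _
  have hftc := intervalIntegral.integral_eq_sub_of_hasDerivAt hderiv (hleft.sub hright)
  rw [intervalIntegral.integral_sub hleft hright,
    intervalIntegral.integral_const_mul, intervalIntegral.integral_const_mul,
    Real.rpow_inv_rpow hC (by linarith), sub_self, Real.zero_rpow (by linarith),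
    zero_pow hn] at hftc
  linarith

theorem intervalIntegral_pow_mul_rpow_mul_sub_rpow (hq : 0 < q) (hC : 0 ≤ C) (hs : 0 ≤ s) :
    ∫ r in (0 : ℝ)..C ^ q⁻¹, r ^ (n - 1) * r ^ q * (C - r ^ q) ^ s
      = C * (∫ r in (0 : ℝ)..C ^ q⁻¹, r ^ (n - 1) * (C - r ^ q) ^ s)
        - ∫ r in (0 : ℝ)..C ^ q⁻¹, r ^ (n - 1) * (C - r ^ q) ^ (s + 1) := by
  have hcont : ∀ t : ℝ, 0 ≤ t → Continuous fun r : ℝ => r ^ (n - 1) * (C - r ^ q) ^ t :=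
    fun t ht => by
      exact (continuous_pow _).mul ((continuous_const.sub
        (Real.continuous_rpow_const hq.le)).rpow_const fun _ => Or.inr ht)
  have hsplit : ∀ r ∈ uIcc 0 (C ^ q⁻¹), r ^ (n - 1) * r ^ q * (C - r ^ q) ^ s
      = C * (r ^ (n - 1) * (C - r ^ q) ^ s) - r ^ (n - 1) * (C - r ^ q) ^ (s + 1) := by
    intro r hr
    rw [uIcc_of_le (by positivity)] at hr
    have hrC : r ^ q ≤ C := (Real.le_rpow_inv_iff_of_pos hr.1 hC hq).mp hr.2
    rw [Real.rpow_add_one' (sub_nonneg.mpr hrC) (by linarith)]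
    ring
  rw [intervalIntegral.integral_congr hsplit, intervalIntegral.integral_sub
    (f := fun r => C * (r ^ (n - 1) * (C - r ^ q) ^ s))
    (g := fun r => r ^ (n - 1) * (C - r ^ q) ^ (s + 1))
    ((continuous_const.mul (hcont s hs)).intervalIntegrable _ _)
    ((hcont _ (by linarith)).intervalIntegrable _ _), intervalIntegral.integral_const_mul]

theorem integral_max_sub_norm_rpow_rpow (hn : n ≠ 0) (hq : 0 < q) (hC : 0 ≤ C) (hs : 0 < s) :
    ∫ x : EuclideanSpace ℝ (Fin n), (max (C - ‖x‖ ^ q) 0) ^ s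
      = n * volume.real (ball (0 : EuclideanSpace ℝ (Fin n)) 1)
          * ∫ r in (0 : ℝ)..C ^ q⁻¹, r ^ (n - 1) * (C - r ^ q) ^ s := by
  simpa using integral_fun_norm_mul_max_sub_rpow_rpow hn hq hC hs continuous_const (g := fun _ => 1)

theorem integral_norm_rpow_mul_max_sub_norm_rpow_rpow_s9 (hn : n ≠ 0) (hq : 0 < q) (hC : 0 ≤ C)
    (hs : 0 < s) :
    ∫ x : EuclideanSpace ℝ (Fin n), ‖x‖ ^ q * (max (C - ‖x‖ ^ q) 0) ^ s
      = C * (∫ x : EuclideanSpace ℝ (Fin n), (max (C - ‖x‖ ^ q) 0) ^ s)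
        - ∫ x : EuclideanSpace ℝ (Fin n), (max (C - ‖x‖ ^ q) 0) ^ (s + 1) := by
  rw [integral_fun_norm_mul_max_sub_rpow_rpow hn hq hC hs (g := fun r => r ^ q)
      (Real.continuous_rpow_const hq.le), integral_max_sub_norm_rpow_rpow hn hq hC hs,
    integral_max_sub_norm_rpow_rpow hn hq hC (by linarith),
    intervalIntegral_pow_mul_rpow_mul_sub_rpow hq hC hs.le]
  ring

theorem natCast_mul_integral_max_sub_norm_rpow_rpow_add_one (hn : n ≠ 0) (hq : 1 ≤ q)
    (hC : 0 ≤ C) (hs : 0 < s) :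
    n * ∫ x : EuclideanSpace ℝ (Fin n), (max (C - ‖x‖ ^ q) 0) ^ (s + 1)
      = q * (s + 1) * ∫ x : EuclideanSpace ℝ (Fin n), ‖x‖ ^ q * (max (C - ‖x‖ ^ q) 0) ^ s := by
  have hq0 : 0 < q := by linarith
  rw [integral_fun_norm_mul_max_sub_rpow_rpow hn hq0 hC hs (g := fun r => r ^ q)
      (Real.continuous_rpow_const hq0.le), integral_max_sub_norm_rpow_rpow hn hq0 hC (by linarith),
    mul_left_comm, natCast_mul_intervalIntegral_sub_rpow_add_one hn hq hC hs.le]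
  ring

end Moments

theorem stmt9 (n : ℕ) (hn : 1 ≤ n) (p q b γ C : ℝ) (hp : 1 < p) (hq : q = p / (p - 1))
    (hb : 0 < b) (hγ : γ = b + 1 / (p - 1)) (hC : 0 < C)
    (hmass : ∫ x : EuclideanSpace ℝ (Fin n), (max (C - ‖x‖ ^ q) 0) ^ (1 / b) = 1) :
    ((b + 1) / (γ * ∫ x : EuclideanSpace ℝ (Fin n),
        ((max (C - ‖x‖ ^ q) 0) ^ (1 / b)) ^ (b + 1))) *
      ∫ x : EuclideanSpace ℝ (Fin n),
        ((max (C - ‖x‖ ^ q) 0) ^ (1 / b)) ^ (-1 / (p - 1)) *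
          ‖gradient (fun y : EuclideanSpace ℝ (Fin n) =>
            ((max (C - ‖y‖ ^ q) 0) ^ (1 / b)) ^ γ) x‖ ^ p
      = (q * γ / b) ^ (p - 1) * n := by
  have hn0 : n ≠ 0 := by omega
  have hp1 : 0 < p - 1 := by linarith
  have hq1 : 1 ≤ q := by rw [hq, le_div_iff₀ hp1]; linarith
  have hγ0 : 0 < γ := by rw [hγ]; positivity
  have hpower : ∀ x : EuclideanSpace ℝ (Fin n),
      ((max (C - ‖x‖ ^ q) 0) ^ (1 / b)) ^ (b + 1) = (max (C - ‖x‖ ^ q) 0) ^ (1 / b + 1) :=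
    fun x => by rw [← Real.rpow_mul (le_max_right _ _)]; congr 1; field_simp; ring
  have hs : 0 < 1 / b := one_div_pos.mpr hb
  have hfirst := integral_norm_rpow_mul_max_sub_norm_rpow_rpow_s9 hn0 (by linarith : 0 < q) hC.le hs
  have hsecond := natCast_mul_integral_max_sub_norm_rpow_rpow_add_one hn0 hq1 hC.le hs
  simp only [hpower, max_sub_norm_rpow_fisher_integrand hp hq hb hγ, integral_const_mul]
  set M₁ := ∫ x : EuclideanSpace ℝ (Fin n), ‖x‖ ^ q * (max (C - ‖x‖ ^ q) 0) ^ (1 / b)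
  set M₂ := ∫ x : EuclideanSpace ℝ (Fin n), (max (C - ‖x‖ ^ q) 0) ^ (1 / b + 1)
  rw [hmass, mul_one] at hfirst
  have hM₂ : M₂ ≠ 0 := by
    rintro h
    rw [h, sub_zero] at hfirst
    rw [h, hfirst, mul_zero] at hsecond
    have : 0 < q * (1 / b + 1) * C := by positivity
    linarith
  have hK : (q * γ / b) ^ p = (q * γ / b) ^ (p - 1) * (q * γ / b) := by
    rw [← Real.rpow_add_one (by positivity), sub_add_cancel]
  rw [hK]
  field_simp
  field_simp at hsecond
  linear_combination -hsecond
end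

section
/- Let p > 1, b > -p/(n(p-1)), b ≠ 0, a = nb/(nb(p-1)+p), and let U(x,t) = t^{-a/b} B(t^{-a/(nb)} x) where B(ξ) = (C - |ξ|^{p/(p-1)})_+^{1/b} (for b > 0) or (C + |ξ|^{p/(p-1)})^{1/b} (for -p/(n(p-1)) < b < 0) is the Barenblatt profile with unit mass. Then the p-Rényi entropy power N_b(U(·,t)) = (∫_{ℝⁿ} U(x,t)^{b+1} dx)^{-1/a} is a linear function of t: N_b(U(·,t)) = N_b(U(·,1))·t. -/
/-! The profile `U(·, t)` is the dilate `x ↦ t^(-a/b) B(t^(-a/(nb)) x)` of `B`. A change of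
variables gives `∫ U(·, t)^(b+1) = t^(-a/b·(b+1) + a/b) ∫ B^(b+1) = t^(-a) ∫ B^(b+1)`, and raising
to the power `-1/a` turns the factor `t^(-a)` into `t`. -/

open MeasureTheory Module

namespace Real

theorem mul_rpow_of_pos_left {x : ℝ} (hx : 0 < x) (y z : ℝ) : (x * y) ^ z = x ^ z * y ^ z := by
  rcases le_or_gt 0 y with hy | hy
  · exact mul_rpow hx.le hy
  · rw [rpow_def_of_neg (mul_neg_of_pos_of_neg hx hy), rpow_def_of_neg hy, rpow_def_of_pos hx,
      log_mul hx.ne' hy.ne, add_mul, exp_add, mul_assoc]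

end Real

section Scaling

variable {E : Type*} [NormedAddCommGroup E] [NormedSpace ℝ E] [FiniteDimensional ℝ E]
  [MeasurableSpace E] [BorelSpace E] (μ : Measure E) [μ.IsAddHaarMeasure]

theorem integral_rpow_const_mul_comp_smul (f : E → ℝ) {c r : ℝ} (hc : 0 < c) (hr : 0 ≤ r)
    (s : ℝ) : ∫ x, (c * f (r • x)) ^ s ∂μ = c ^ s * (r ^ finrank ℝ E)⁻¹ * ∫ x, f x ^ s ∂μ := by
  simp_rw [Real.mul_rpow_of_pos_left hc]
  rw [integral_const_mul, Measure.integral_comp_smul_of_nonneg μ (fun y => f y ^ s) r (hR := hr),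
    smul_eq_mul, mul_assoc]

theorem integral_selfSimilar_rpow_add_one (f : E → ℝ) {n : ℕ} (hn : finrank ℝ E = n)
    (hn0 : n ≠ 0) {a b t : ℝ} (hb : b ≠ 0) (ht : 0 < t) :
    ∫ x, (t ^ (-a / b) * f (t ^ (-a / (n * b)) • x)) ^ (b + 1) ∂μ
      = t ^ (-a) * ∫ x, f x ^ (b + 1) ∂μ := by
  rw [integral_rpow_const_mul_comp_smul μ f (Real.rpow_pos_of_pos ht _)
    (Real.rpow_nonneg ht.le _), hn, ← Real.rpow_natCast, ← Real.rpow_mul ht.le,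
    ← Real.rpow_mul ht.le, ← Real.rpow_neg ht.le, ← Real.rpow_add ht]
  congr 2
  field_simp
  ring

end Scaling

theorem stmt16_general (n : ℕ) (hn : 1 ≤ n) (p b a C : ℝ) (hp : 1 < p) (hb : b ≠ 0)
    (hb' : -p / ((n : ℝ) * (p - 1)) < b)
    (ha : a = (n : ℝ) * b / ((n : ℝ) * b * (p - 1) + p)) :
    let q := p / (p - 1)
    let B : EuclideanSpace ℝ (Fin n) → ℝ :=
      fun ξ => if 0 < b then (max (C - ‖ξ‖ ^ q) 0) ^ (1 / b) else (C + ‖ξ‖ ^ q) ^ (1 / b)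
    let U : EuclideanSpace ℝ (Fin n) → ℝ → ℝ :=
      fun x t => t ^ (-a / b) * B ((t ^ (-a / ((n : ℝ) * b))) • x)
    (∫ x, B x = 1) →
    ∀ t : ℝ, 0 < t →
      (∫ x, U x t ^ (b + 1)) ^ (-1 / a) = (∫ x, U x 1 ^ (b + 1)) ^ (-1 / a) * t := by
  intro q B U _ t ht
  have hn0 : n ≠ 0 := by omega
  have hden : 0 < (n : ℝ) * b * (p - 1) + p := by
    have h := (div_lt_iff₀ (by positivity : (0 : ℝ) < n * (p - 1))).mp hb'
    nlinarith
  have ha0 : a ≠ 0 := ha ▸ div_ne_zero (mul_ne_zero (by positivity) hb) hden.ne'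
  have hscale (s : ℝ) (hs : 0 < s) : ∫ x, U x s ^ (b + 1) = s ^ (-a) * ∫ x, B x ^ (b + 1) :=
    integral_selfSimilar_rpow_add_one volume B finrank_euclideanSpace_fin hn0 hb hs
  rw [hscale t ht, hscale 1 one_pos, Real.one_rpow, one_mul,
    Real.mul_rpow_of_pos_left (Real.rpow_pos_of_pos ht _), ← Real.rpow_mul ht.le,
    show -a * (-1 / a) = 1 by field_simp, Real.rpow_one, mul_comm]

theorem stmt16 (n : ℕ) (hn : 1 ≤ n) (p b a C : ℝ) (hp : 1 < p) (hb : b ≠ 0)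
    (hb' : -p / ((n : ℝ) * (p - 1)) < b) (hC : 0 < C)
    (ha : a = (n : ℝ) * b / ((n : ℝ) * b * (p - 1) + p)) :
    let q := p / (p - 1)
    let B : EuclideanSpace ℝ (Fin n) → ℝ :=
      fun ξ => if 0 < b then (max (C - ‖ξ‖ ^ q) 0) ^ (1 / b) else (C + ‖ξ‖ ^ q) ^ (1 / b)
    let U : EuclideanSpace ℝ (Fin n) → ℝ → ℝ :=
      fun x t => t ^ (-a / b) * B ((t ^ (-a / ((n : ℝ) * b))) • x)
    (∫ x, B x = 1) →
    ∀ t : ℝ, 0 < t →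
      (∫ x, U x t ^ (b + 1)) ^ (-1 / a) = (∫ x, U x 1 ^ (b + 1)) ^ (-1 / a) * t :=
  stmt16_general n hn p b a C hp hb hb' ha
end

section
/- Let n ≥ 1, p > 1, q = p/(p-1), b > 0, γ = b + 1/(p-1), σ = -(p/(nb)+p-1), a = -1/σ. The Barenblatt profile B(x) = (C-|x|^q)_+^{1/b} with unit mass satisfies N_b(B)·I_b(B) = (2/q)^{p/n}(qγ/b)^{p-1} π^{p/2} n (q(b+1)/(nb+q(b+1)))^σ (Γ(n/q)Γ(1/b+1)/(Γ(n/2)Γ(n/q+1/b+1)))^{p/n}, where N_b(B) = (∫B^{b+1})^σ and I_b(B) = (qγ/b)^{p-1} n. -/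
/-!
Polar coordinates and the substitutions `t = r ^ q`, `t = C u` turn `∫ (C - ‖x‖ ^ q)₊ ^ s` over a
`d`-dimensional space into `C ^ (d / q + s)` times a Beta integral, i.e. `C ^ (d / q + s) * M(s)`
with `M = barenblattMass d q`. The constant `C = D ^ (-b q / (n b + q))` is chosen so that
`C ^ (n / q + 1 / b) * M(1 / b) = 1` (unit mass), and `M(s + 1) = (s + 1) / (n / q + s + 1) * M(s)`
then gives `∫ B ^ (b + 1) = q (b + 1) / (n b + q (b + 1)) * C`. Finally `C ^ σ = D ^ (p / n)`,
since `-b q σ / (n b + q) = p / n` when `q (p - 1) = p`.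
-/

open MeasureTheory Set Real Module

theorem intervalIntegral_rpow_mul_one_sub_rpow {a c : ℝ} (ha : 0 < a) (hc : 0 < c) :
    ∫ x in (0 : ℝ)..1, x ^ (a - 1) * (1 - x) ^ (c - 1) = Gamma a * Gamma c / Gamma (a + c) := by
  have hbeta : Complex.betaIntegral a c
      = ((∫ x in (0 : ℝ)..1, x ^ (a - 1) * (1 - x) ^ (c - 1) : ℝ) : ℂ) := by
    rw [Complex.betaIntegral, ← intervalIntegral.integral_ofReal]
    refine intervalIntegral.integral_congr fun x hx => ?_
    rw [uIcc_of_le zero_le_one] at hx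
    push_cast
    rw [Complex.ofReal_cpow hx.1, Complex.ofReal_cpow (by linarith [hx.2])]
    push_cast
    ring_nf
  have h := Complex.Gamma_mul_Gamma_eq_betaIntegral (s := a) (t := c)
    (by simpa using ha) (by simpa using hc)
  rw [hbeta, ← Complex.ofReal_add, Complex.Gamma_ofReal, Complex.Gamma_ofReal,
    Complex.Gamma_ofReal, ← Complex.ofReal_mul, ← Complex.ofReal_mul, Complex.ofReal_inj] at h
  rw [h, mul_div_cancel_left₀ _ (Gamma_pos_of_pos (add_pos ha hc)).ne']

theorem integral_Ioi_rpow_mul_posPart_one_sub_rpow {a s : ℝ} (ha : 0 < a) (hs : 0 < s) :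
    ∫ t in Ioi (0 : ℝ), t ^ (a - 1) * max (1 - t) 0 ^ s
      = Gamma a * Gamma (s + 1) / Gamma (a + s + 1) := by
  have hvanish : ∀ t ∈ Ioi (0 : ℝ) \ Ioc 0 1, t ^ (a - 1) * max (1 - t) 0 ^ s = 0 := by
    rintro t ⟨ht0, ht1⟩
    have : 1 < t := lt_of_not_ge fun h => ht1 ⟨ht0, h⟩
    rw [max_eq_right (by linarith), zero_rpow hs.ne', mul_zero]
  rw [setIntegral_eq_of_subset_of_forall_sdiff_eq_zero measurableSet_Ioi Ioc_subset_Ioi_self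
    hvanish, ← intervalIntegral.integral_of_le zero_le_one, add_assoc,
    ← intervalIntegral_rpow_mul_one_sub_rpow ha (by positivity : 0 < s + 1)]
  refine intervalIntegral.integral_congr fun t ht => ?_
  rw [uIcc_of_le zero_le_one] at ht
  rw [max_eq_left (by linarith [ht.2]), add_sub_cancel_right]

theorem integral_Ioi_rpow_mul_posPart_sub_rpow {a s C : ℝ} (ha : 0 < a) (hs : 0 < s)
    (hC : 0 < C) :
    ∫ t in Ioi (0 : ℝ), t ^ (a - 1) * max (C - t) 0 ^ s
      = C ^ (a + s) * (Gamma a * Gamma (s + 1) / Gamma (a + s + 1)) := by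
  have hscale : ∀ u ∈ Ioi (0 : ℝ), (C * u) ^ (a - 1) * max (C - C * u) 0 ^ s
      = C ^ (a - 1 + s) * (u ^ (a - 1) * max (1 - u) 0 ^ s) := by
    intro u hu
    rw [← mul_one_sub, show max (C * (1 - u)) 0 = C * max (1 - u) 0 by
      rw [mul_max_of_nonneg _ _ hC.le, mul_zero], mul_rpow hC.le (le_of_lt hu),
      mul_rpow hC.le (le_max_right _ _), rpow_add hC]
    ring
  have hsub := integral_comp_mul_left_Ioi' (fun t => t ^ (a - 1) * max (C - t) 0 ^ s) 0 hC
  rw [mul_zero] at hsub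
  rw [← hsub, setIntegral_congr_fun measurableSet_Ioi hscale,
    integral_const_mul, integral_Ioi_rpow_mul_posPart_one_sub_rpow ha hs, smul_eq_mul, ← mul_assoc,
    ← rpow_one_add' hC.le (by linarith)]
  ring_nf

theorem integral_Ioi_rpow_mul_posPart_sub_rpow_rpow {a q s C : ℝ} (ha : 0 < a) (hq : 0 < q)
    (hs : 0 < s) (hC : 0 < C) :
    ∫ r in Ioi (0 : ℝ), r ^ (a - 1) * max (C - r ^ q) 0 ^ s
      = q⁻¹ * C ^ (a / q + s) * (Gamma (a / q) * Gamma (s + 1) / Gamma (a / q + s + 1)) := by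
  have hsubst : ∀ r ∈ Ioi (0 : ℝ), r ^ (a - 1) * max (C - r ^ q) 0 ^ s
      = q⁻¹ * ((q * r ^ (q - 1)) • ((r ^ q) ^ (a / q - 1) * max (C - r ^ q) 0 ^ s)) := by
    intro r hr
    rw [smul_eq_mul, ← rpow_mul (le_of_lt hr), mul_sub, mul_div_cancel₀ _ hq.ne', mul_one]
    rw [show r ^ (a - 1) = r ^ (q - 1) * r ^ (a - q) by rw [← rpow_add hr]; ring_nf]
    field_simp
  rw [setIntegral_congr_fun measurableSet_Ioi hsubst, integral_const_mul,
    integral_comp_rpow_Ioi_of_pos (g := fun t => t ^ (a / q - 1) * max (C - t) 0 ^ s) hq,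
    integral_Ioi_rpow_mul_posPart_sub_rpow (by positivity) hs hC, mul_assoc]

noncomputable def barenblattMass (d q s : ℝ) : ℝ :=
  2 / q * (π ^ (d / 2) / Gamma (d / 2)) * (Gamma (d / q) * Gamma (s + 1) / Gamma (d / q + s + 1))

theorem integral_posPart_sub_norm_rpow_rpow {E : Type*} [NormedAddCommGroup E]
    [InnerProductSpace ℝ E] [FiniteDimensional ℝ E] [MeasurableSpace E] [BorelSpace E]
    [Nontrivial E] {q s C : ℝ} (hq : 0 < q) (hs : 0 < s) (hC : 0 < C) :
    ∫ x : E, max (C - ‖x‖ ^ q) 0 ^ s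
      = C ^ (finrank ℝ E / q + s) * barenblattMass (finrank ℝ E) q s := by
  have hd : (0 : ℝ) < finrank ℝ E := Nat.cast_pos.mpr finrank_pos
  have hball : volume.real (Metric.ball (0 : E) 1)
      = π ^ ((finrank ℝ E : ℝ) / 2) / Gamma (finrank ℝ E / 2 + 1) := by
    rw [measureReal_def, InnerProductSpace.volume_ball, ENNReal.ofReal_one, one_pow, one_mul,
      ENNReal.toReal_ofReal (by positivity), sqrt_eq_rpow, ← rpow_mul_natCast pi_nonneg]
    ring_nf
  have hradial : ∫ r in Ioi (0 : ℝ), r ^ (finrank ℝ E - 1) • max (C - r ^ q) 0 ^ s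
      = ∫ r in Ioi (0 : ℝ), r ^ ((finrank ℝ E : ℝ) - 1) * max (C - r ^ q) 0 ^ s := by
    refine setIntegral_congr_fun measurableSet_Ioi fun r _ => ?_
    rw [smul_eq_mul, ← rpow_natCast, Nat.cast_pred finrank_pos]
  rw [integral_fun_norm_addHaar volume (fun r => max (C - r ^ q) 0 ^ s), hradial,
    integral_Ioi_rpow_mul_posPart_sub_rpow_rpow hd hq hs hC, hball, nsmul_eq_mul, smul_eq_mul,
    Gamma_add_one (by positivity), barenblattMass]
  field_simp

theorem barenblattMass_pos {d q s : ℝ} (hd : 0 < d) (hq : 0 < q) (hs : 0 < s + 1) :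
    0 < barenblattMass d q s := by
  have hdq : 0 < d / q := div_pos hd hq
  have := Gamma_pos_of_pos (by positivity : 0 < d / 2)
  have := Gamma_pos_of_pos hdq
  have := Gamma_pos_of_pos hs
  have := Gamma_pos_of_pos (by linarith : 0 < d / q + s + 1)
  unfold barenblattMass
  positivity

theorem barenblattMass_add_one {d q s : ℝ} (hs : s + 1 ≠ 0) (hds : d / q + s + 1 ≠ 0) :
    barenblattMass d q (s + 1) = (s + 1) / (d / q + s + 1) * barenblattMass d q s := by
  rw [barenblattMass, barenblattMass, Gamma_add_one hs,
    show d / q + (s + 1) + 1 = d / q + s + 1 + 1 by ring, Gamma_add_one hds,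
    mul_comm (d / q + s + 1), ← div_div]
  ring

theorem integral_posPart_sub_norm_rpow_rpow_add_one_of_mass_eq_one {E : Type*}
    [NormedAddCommGroup E] [InnerProductSpace ℝ E] [FiniteDimensional ℝ E] [MeasurableSpace E]
    [BorelSpace E] [Nontrivial E] {q s C : ℝ} (hq : 0 < q) (hs : 0 < s) (hC : 0 < C)
    (hmass : C ^ (finrank ℝ E / q + s) * barenblattMass (finrank ℝ E) q s = 1) :
    ∫ x : E, max (C - ‖x‖ ^ q) 0 ^ (s + 1) = (s + 1) / (finrank ℝ E / q + s + 1) * C := by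
  rw [integral_posPart_sub_norm_rpow_rpow hq (by positivity) hC,
    barenblattMass_add_one (by positivity) (by positivity), ← add_assoc, rpow_add_one hC.ne']
  linear_combination (s + 1) / (finrank ℝ E / q + s + 1) * C * hmass

theorem integral_barenblatt_rpow_add_one {E : Type*} [NormedAddCommGroup E]
    [InnerProductSpace ℝ E] [FiniteDimensional ℝ E] [MeasurableSpace E] [BorelSpace E]
    [Nontrivial E] {q b C : ℝ} (hq : 0 < q) (hb : 0 < b)
    (hC : C = barenblattMass (finrank ℝ E) q (1 / b) ^ (-(b * q) / (finrank ℝ E * b + q))) :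
    ∫ x : E, max (C - ‖x‖ ^ q) 0 ^ (1 / b + 1)
      = q * (b + 1) / (finrank ℝ E * b + q * (b + 1)) * C := by
  have hd : (0 : ℝ) < finrank ℝ E := Nat.cast_pos.mpr finrank_pos
  have hM := barenblattMass_pos hd hq (by positivity : 0 < 1 / b + 1)
  have hmass : C ^ (finrank ℝ E / q + 1 / b) * barenblattMass (finrank ℝ E) q (1 / b) = 1 := by
    rw [hC, ← rpow_mul hM.le,
      show -(b * q) / (finrank ℝ E * b + q) * (finrank ℝ E / q + 1 / b) = -1 by field_simp,
      rpow_neg_one, inv_mul_cancel₀ hM.ne']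
  rw [integral_posPart_sub_norm_rpow_rpow_add_one_of_mass_eq_one hq (by positivity)
    (hC ▸ rpow_pos_of_pos hM _) hmass]
  congr 1
  field_simp
  ring

theorem stmt18_general (n : ℕ) (hn : 1 ≤ n) (p q b γ σ D C : ℝ) (hp : 1 < p)
    (hq : q = p / (p - 1)) (hb : 0 < b)
    (hσ : σ = -(p / ((n : ℝ) * b) + p - 1))
    (hD : D = (2 / q) * (Real.pi ^ ((n : ℝ) / 2) / Real.Gamma ((n : ℝ) / 2)) *
        (Real.Gamma ((n : ℝ) / q) * Real.Gamma (1 / b + 1) / Real.Gamma ((n : ℝ) / q + 1 / b + 1)))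
    (hC : C = D ^ (-(b * q) / ((n : ℝ) * b + q))) :
    (∫ x : EuclideanSpace ℝ (Fin n), ((max (C - ‖x‖ ^ q) 0) ^ (1 / b)) ^ (b + 1)) ^ σ *
        ((q * γ / b) ^ (p - 1) * n)
      = (2 / q) ^ (p / (n : ℝ)) * (q * γ / b) ^ (p - 1) * Real.pi ^ (p / 2) * n *
        (q * (b + 1) / ((n : ℝ) * b + q * (b + 1))) ^ σ *
        ((Real.Gamma ((n : ℝ) / q) * Real.Gamma (1 / b + 1)) /
          (Real.Gamma ((n : ℝ) / 2) * Real.Gamma ((n : ℝ) / q + 1 / b + 1))) ^ (p / (n : ℝ)) := by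
  have : Nonempty (Fin n) := ⟨⟨0, hn⟩⟩
  have hn0 : (0 : ℝ) < n := by exact_mod_cast hn
  have hq0 : 0 < q := by rw [hq]; exact div_pos (by linarith) (by linarith)
  have hD0 : 0 < D := hD ▸ barenblattMass_pos hn0 hq0 (by positivity : 0 < 1 / b + 1)
  have hprofile : ∀ x : EuclideanSpace ℝ (Fin n),
      (max (C - ‖x‖ ^ q) 0 ^ (1 / b)) ^ (b + 1) = max (C - ‖x‖ ^ q) 0 ^ (1 / b + 1) := by
    intro x
    rw [← rpow_mul (le_max_right _ _), one_div_mul_eq_div, add_div, div_self hb.ne',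
      add_comm 1 (1 / b)]
  have hCσ : C ^ σ = D ^ (p / n) := by
    have hqp : q * (p - 1) = p := by rw [hq]; field_simp [(by linarith : p - 1 ≠ 0)]
    rw [hC, ← rpow_mul hD0.le, hσ]
    congr 1
    field_simp
    linear_combination b * n * hqp
  have hDsplit : D = 2 / q * π ^ ((n : ℝ) / 2) * (Gamma (n / q) * Gamma (1 / b + 1) /
      (Gamma (n / 2) * Gamma (n / q + 1 / b + 1))) := by
    rw [hD]
    ring
  have hB := integral_barenblatt_rpow_add_one (E := EuclideanSpace ℝ (Fin n)) (C := C) hq0 hb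
    (by rw [finrank_euclideanSpace_fin, hC, hD]; rfl)
  rw [finrank_euclideanSpace_fin] at hB
  simp only [hprofile]
  rw [hB, mul_rpow (by positivity) (hC ▸ rpow_pos_of_pos hD0 _).le, hCσ, hDsplit,
    mul_rpow (by positivity) (by positivity), mul_rpow (by positivity) (by positivity),
    ← rpow_mul pi_nonneg, show (n : ℝ) / 2 * (p / n) = p / 2 by field_simp]
  ring

theorem stmt18 (n : ℕ) (hn : 1 ≤ n) (p q b γ σ D C : ℝ) (hp : 1 < p)
    (hq : q = p / (p - 1)) (hb : 0 < b) (hγ : γ = b + 1 / (p - 1))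
    (hσ : σ = -(p / ((n : ℝ) * b) + p - 1))
    (hD : D = (2 / q) * (Real.pi ^ ((n : ℝ) / 2) / Real.Gamma ((n : ℝ) / 2)) *
        (Real.Gamma ((n : ℝ) / q) * Real.Gamma (1 / b + 1) / Real.Gamma ((n : ℝ) / q + 1 / b + 1)))
    (hC : C = D ^ (-(b * q) / ((n : ℝ) * b + q))) :
    (∫ x : EuclideanSpace ℝ (Fin n), ((max (C - ‖x‖ ^ q) 0) ^ (1 / b)) ^ (b + 1)) ^ σ *
        ((q * γ / b) ^ (p - 1) * n)
      = (2 / q) ^ (p / (n : ℝ)) * (q * γ / b) ^ (p - 1) * Real.pi ^ (p / 2) * n *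
        (q * (b + 1) / ((n : ℝ) * b + q * (b + 1))) ^ σ *
        ((Real.Gamma ((n : ℝ) / q) * Real.Gamma (1 / b + 1)) /
          (Real.Gamma ((n : ℝ) / 2) * Real.Gamma ((n : ℝ) / q + 1 / b + 1))) ^ (p / (n : ℝ)) :=
  stmt18_general n hn p q b γ σ D C hp hq hb hσ hD hC
end
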